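/- arXiv:2001.02854 — 5 statements merged into one kernel-verified Lean document; each statement's English description precedes it below -/
import Mathlib

section
/- Let 0 < ρ ≤ 1/2, let k ≥ 1, N ≥ 1, T ≥ 1 be integers, and let P be a random k×N matrix over F₂ with i.i.d. Bernoulli(ρ) entries. Then for every u ∈ F₂^k with Hamming weight W_H(u) ≥ T and every v ∈ F₂^N: Pr{uP = v} ≤ Pr{uP = 0} = (1 - ρ_{W_H(u)})^N ≤ (1 - ρ_T)^N = ((1 + (1-2ρ)^T)/2)^N, where ρ_w = (1-(1-2ρ)^w)/2. -/
/-!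
Write `ψ x = (-1)^x` for `x : ZMod 2`. The indicator of `u ⬝ᵥ c = b` is `(1 + ψ b * ψ (u ⬝ᵥ c)) / 2`,
and for a vector `c` of independent Bernoulli(ρ) bits `E[ψ (u ⬝ᵥ c)] = ∏_{u i ≠ 0} E[ψ (c i)]
= (1 - 2ρ)^{W_H(u)}`, so `Pr{u ⬝ᵥ c = b} = (1 ± (1 - 2ρ)^{W_H(u)}) / 2`. Coordinate `j` of `uP`
only depends on column `j` of `P`, and the columns are independent, so `Pr{uP = v}` is the
product of these column probabilities. For `0 ≤ ρ ≤ 1/2` each factor is largest at `v j = 0`,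
and `(1 - 2ρ)^w` decreases in `w`.
-/

open Matrix Finset

namespace BernoulliMatrix

lemma zmod_two_eq_zero_or_one (x : ZMod 2) : x = 0 ∨ x = 1 := by
  revert x; decide

lemma sum_zmod_two {M : Type*} [AddCommMonoid M] (f : ZMod 2 → M) :
    ∑ x, f x = f 0 + f 1 :=
  Fin.sum_univ_two f

noncomputable def signChar : AddChar (ZMod 2) ℝ :=
  AddChar.zmodChar 2 (by norm_num : (-1 : ℝ) ^ 2 = 1)

@[simp] lemma signChar_zero : signChar 0 = 1 := AddChar.map_zero_eq_one _

@[simp] lemma signChar_one : signChar 1 = -1 := by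
  simp [signChar, AddChar.zmodChar_apply, ZMod.val_one]

lemma signChar_sum {ι : Type*} (s : Finset ι) (f : ι → ZMod 2) :
    signChar (∑ i ∈ s, f i) = ∏ i ∈ s, signChar (f i) := by
  classical
  induction s using Finset.induction_on with
  | empty => simp
  | insert a s ha ih => rw [sum_insert ha, prod_insert ha, AddChar.map_add_eq_mul, ih]

lemma ite_eq_eq_one_add_signChar_mul (x b : ZMod 2) :
    (if x = b then (1 : ℝ) else 0) = (1 + signChar b * signChar x) / 2 := by
  rcases zmod_two_eq_zero_or_one x with rfl | rfl <;>
    rcases zmod_two_eq_zero_or_one b with rfl | rfl <;> norm_num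

variable {ι : Type*} [Fintype ι] [DecidableEq ι] (ρ : ℝ)

lemma sum_prod_bernoulli_eq_one :
    ∑ c : ι → ZMod 2, ∏ i, (if c i = 1 then ρ else 1 - ρ) = 1 := by
  rw [← Fintype.prod_sum (fun _ (x : ZMod 2) => if x = 1 then ρ else 1 - ρ)]
  simp [sum_zmod_two]

lemma sum_signChar_dotProduct_mul_prod_bernoulli (u : ι → ZMod 2) :
    ∑ c : ι → ZMod 2, signChar (u ⬝ᵥ c) * ∏ i, (if c i = 1 then ρ else 1 - ρ)
      = (1 - 2 * ρ) ^ hammingNorm u := by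
  simp only [dotProduct, signChar_sum, ← prod_mul_distrib]
  rw [← Fintype.prod_sum (fun i (x : ZMod 2) => signChar (u i * x) * if x = 1 then ρ else 1 - ρ)]
  have hbit : ∀ i, ∑ x : ZMod 2, signChar (u i * x) * (if x = 1 then ρ else 1 - ρ)
      = if u i = 0 then 1 else 1 - 2 * ρ := by
    intro i
    rcases zmod_two_eq_zero_or_one (u i) with h | h <;> simp [h, sum_zmod_two]; ring
  simp only [hbit, prod_ite, prod_const_one, prod_const, one_mul, hammingNorm]

lemma sum_ite_dotProduct_eq (u : ι → ZMod 2) (b : ZMod 2) :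
    (∑ c : ι → ZMod 2, if u ⬝ᵥ c = b then ∏ i, (if c i = 1 then ρ else 1 - ρ) else 0)
      = (1 + signChar b * (1 - 2 * ρ) ^ hammingNorm u) / 2 := by
  have hterm : ∀ c : ι → ZMod 2,
      (if u ⬝ᵥ c = b then ∏ i, (if c i = 1 then ρ else 1 - ρ) else 0)
        = (∏ i, (if c i = 1 then ρ else 1 - ρ)) / 2
          + signChar b / 2 * (signChar (u ⬝ᵥ c) * ∏ i, (if c i = 1 then ρ else 1 - ρ)) := by
    intro c
    rw [← boole_mul, ite_eq_eq_one_add_signChar_mul]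
    ring
  rw [sum_congr rfl fun c _ => hterm c, sum_add_distrib, ← sum_div, ← mul_sum,
    sum_prod_bernoulli_eq_one, sum_signChar_dotProduct_mul_prod_bernoulli]
  ring

lemma signChar_mul_mem_Icc {a : ℝ} (ha : 0 ≤ a) (b : ZMod 2) :
    signChar b * a ∈ Set.Icc (-a) a := by
  rcases zmod_two_eq_zero_or_one b with rfl | rfl <;> constructor <;> simp <;> linarith

variable {S R m n : Type*} [CommSemiring S] [CommSemiring R] [Fintype R] [DecidableEq R]
  [Fintype m] [DecidableEq m] [Fintype n] [DecidableEq n]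

theorem sum_ite_vecMul_eq_prod (p : R → S) (u : m → R) (v : n → R) :
    (∑ P : Matrix m n R, if u ᵥ* P = v then ∏ i, ∏ j, p (P i j) else 0)
      = ∏ j, ∑ c : m → R, if u ⬝ᵥ c = v j then ∏ i, p (c i) else 0 := by
  rw [Fintype.prod_sum, ← (Matrix.transposeAddEquiv m n R).symm.sum_comp]
  refine Fintype.sum_congr _ _ fun P => ?_
  rw [Fintype.prod_ite_zero, prod_comm]
  exact if_congr funext_iff rfl rfl

theorem sum_ite_vecMul_eq_prod_bernoulli (u : m → ZMod 2) (v : n → ZMod 2) :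
    (∑ P : Matrix m n (ZMod 2),
        if u ᵥ* P = v then ∏ i, ∏ j, (if P i j = 1 then ρ else 1 - ρ) else 0)
      = ∏ j, (1 + signChar (v j) * (1 - 2 * ρ) ^ hammingNorm u) / 2 := by
  simp only [sum_ite_vecMul_eq_prod (fun x : ZMod 2 => if x = 1 then ρ else 1 - ρ),
    sum_ite_dotProduct_eq]

theorem sum_ite_vecMul_zero_eq_bernoulli (u : m → ZMod 2) :
    (∑ P : Matrix m n (ZMod 2),
        if u ᵥ* P = 0 then ∏ i, ∏ j, (if P i j = 1 then ρ else 1 - ρ) else 0)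
      = ((1 + (1 - 2 * ρ) ^ hammingNorm u) / 2) ^ Fintype.card n := by
  simp only [sum_ite_vecMul_eq_prod_bernoulli, Pi.zero_apply, signChar_zero, one_mul,
    prod_const, card_univ]

theorem sum_ite_vecMul_le_sum_ite_vecMul_zero (hρ0 : 0 ≤ ρ) (hρ1 : ρ ≤ 1 / 2)
    (u : m → ZMod 2) (v : n → ZMod 2) :
    (∑ P : Matrix m n (ZMod 2),
        if u ᵥ* P = v then ∏ i, ∏ j, (if P i j = 1 then ρ else 1 - ρ) else 0)
      ≤ ∑ P : Matrix m n (ZMod 2),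
        if u ᵥ* P = 0 then ∏ i, ∏ j, (if P i j = 1 then ρ else 1 - ρ) else 0 := by
  have hbias0 : 0 ≤ (1 - 2 * ρ) ^ hammingNorm u := pow_nonneg (by linarith) _
  have hbias1 : (1 - 2 * ρ) ^ hammingNorm u ≤ 1 := pow_le_one₀ (by linarith) (by linarith)
  rw [sum_ite_vecMul_eq_prod_bernoulli, sum_ite_vecMul_eq_prod_bernoulli]
  simp only [Pi.zero_apply, signChar_zero, one_mul]
  refine prod_le_prod (fun j _ => ?_) (fun j _ => ?_) <;>
    obtain ⟨hlo, hhi⟩ := signChar_mul_mem_Icc hbias0 (v j) <;> linarith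

end BernoulliMatrix

open BernoulliMatrix in
theorem stmt_4_general (ρ : ℝ) (hρ0 : 0 < ρ) (hρ1 : ρ ≤ 1 / 2) (k N T : ℕ)
    (u : Fin k → ZMod 2) (hu : T ≤ hammingNorm u) (v : Fin N → ZMod 2) :
    (∑ P : Matrix (Fin k) (Fin N) (ZMod 2),
        (if Matrix.vecMul u P = v then
          ∏ i : Fin k, ∏ j : Fin N, (if P i j = 1 then ρ else 1 - ρ) else 0))
      ≤ (∑ P : Matrix (Fin k) (Fin N) (ZMod 2),
          (if Matrix.vecMul u P = 0 then
            ∏ i : Fin k, ∏ j : Fin N, (if P i j = 1 then ρ else 1 - ρ) else 0))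
    ∧ (∑ P : Matrix (Fin k) (Fin N) (ZMod 2),
          (if Matrix.vecMul u P = 0 then
            ∏ i : Fin k, ∏ j : Fin N, (if P i j = 1 then ρ else 1 - ρ) else 0))
        = (1 - (1 - (1 - 2 * ρ) ^ (hammingNorm u)) / 2) ^ N
    ∧ (1 - (1 - (1 - 2 * ρ) ^ (hammingNorm u)) / 2) ^ N
        ≤ (1 - (1 - (1 - 2 * ρ) ^ T) / 2) ^ N
    ∧ (1 - (1 - (1 - 2 * ρ) ^ T) / 2) ^ N = ((1 + (1 - 2 * ρ) ^ T) / 2) ^ N := by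
  have hs0 : 0 ≤ 1 - 2 * ρ := by linarith
  have hs1 : 1 - 2 * ρ ≤ 1 := by linarith
  have hbias_le : (1 - 2 * ρ) ^ hammingNorm u ≤ (1 - 2 * ρ) ^ T :=
    pow_le_pow_of_le_one hs0 hs1 hu
  have hbias0 : 0 ≤ (1 - 2 * ρ) ^ hammingNorm u := pow_nonneg hs0 _
  refine ⟨sum_ite_vecMul_le_sum_ite_vecMul_zero ρ hρ0.le hρ1 u v, ?_,
    pow_le_pow_left₀ (by linarith) (by linarith) N, by ring⟩
  rw [sum_ite_vecMul_zero_eq_bernoulli, Fintype.card_fin]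
  ring

/-- Let `0 < ρ ≤ 1/2`, `k, N, T ≥ 1` integers, and let `P` be a random `k×N`
matrix over `F₂` with i.i.d. Bernoulli(ρ) entries. Then for every `u ∈ F₂^k` with
`W_H(u) ≥ T` and every `v ∈ F₂^N`:
`Pr{uP = v} ≤ Pr{uP = 0} = (1 - ρ_{W_H(u)})^N ≤ (1 - ρ_T)^N = ((1 + (1-2ρ)^T)/2)^N`,
where `ρ_w = (1-(1-2ρ)^w)/2`. Probabilities are expressed as sums of product Bernoulli(ρ)
weights over the matrices realizing the events. -/
theorem stmt_4 (ρ : ℝ) (hρ0 : 0 < ρ) (hρ1 : ρ ≤ 1 / 2) (k N T : ℕ)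
    (hk : 1 ≤ k) (hN : 1 ≤ N) (hT : 1 ≤ T)
    (u : Fin k → ZMod 2) (hu : T ≤ hammingNorm u) (v : Fin N → ZMod 2) :
    (∑ P : Matrix (Fin k) (Fin N) (ZMod 2),
        (if Matrix.vecMul u P = v then
          ∏ i : Fin k, ∏ j : Fin N, (if P i j = 1 then ρ else 1 - ρ) else 0))
      ≤ (∑ P : Matrix (Fin k) (Fin N) (ZMod 2),
          (if Matrix.vecMul u P = 0 then
            ∏ i : Fin k, ∏ j : Fin N, (if P i j = 1 then ρ else 1 - ρ) else 0))
    ∧ (∑ P : Matrix (Fin k) (Fin N) (ZMod 2),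
          (if Matrix.vecMul u P = 0 then
            ∏ i : Fin k, ∏ j : Fin N, (if P i j = 1 then ρ else 1 - ρ) else 0))
        = (1 - (1 - (1 - 2 * ρ) ^ (hammingNorm u)) / 2) ^ N
    ∧ (1 - (1 - (1 - 2 * ρ) ^ (hammingNorm u)) / 2) ^ N
        ≤ (1 - (1 - (1 - 2 * ρ) ^ T) / 2) ^ N
    ∧ (1 - (1 - (1 - 2 * ρ) ^ T) / 2) ^ N = ((1 + (1 - 2 * ρ) ^ T) / 2) ^ N :=
  stmt_4_general ρ hρ0 hρ1 k N T u hu v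
end

section
/- Let Y be a finite set and let W : {0,1} × Y → ℝ be a BIOS channel with strictly positive transition probabilities W(x,y) > 0 admitting an involution π with W(1,y) = W(0,π(y)). Define the capacity C = Σ_{y∈Y} [½W(0,y) log₂(W(0,y)/Q(y)) + ½W(1,y) log₂(W(1,y)/Q(y))] where Q(y) = ½(W(0,y)+W(1,y)), and for γ ∈ [0,1] define E₀(γ) = -log₂ Σ_{y∈Y} (½W(0,y)^{1/(1+γ)} + ½W(1,y)^{1/(1+γ)})^{1+γ}. Then for every real R with 0 ≤ R < C, there exists γ ∈ (0,1] such that E₀(γ) - γR > 0; that is, the random coding exponent E_r(R) = max_{0≤γ≤1}[E₀(γ) - γR] is strictly positive whenever R < C. -/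
/-!
Both `E₀(γ) - γR` and its derivative are explicit at `γ = 0`: the Gallager sum equals `1` there,
so `E₀(0) = 0`, and differentiating `(Σₓ p(x) W(x,y)^{1/(1+γ)})^{1+γ}` at `γ = 0` gives
`E₀'(0) = I(p; W)`, the mutual information. For the uniform input this is `C`, so
`E₀(γ) - γR` vanishes at `0` with slope `C - R > 0` and is therefore positive for small `γ > 0`.
-/

section

open Filter Topology Set Real

theorem HasDerivWithinAt.exists_mem_Ioc_lt {f : ℝ → ℝ} {f' a b : ℝ}
    (hf : HasDerivWithinAt f f' (Ioi a) a) (hf' : 0 < f') (hab : a < b) :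
    ∃ x ∈ Ioc a b, f a < f x := by
  have hslope : ∀ᶠ x in 𝓝[>] a, 0 < slope f a x :=
    ((hasDerivWithinAt_iff_tendsto_slope' self_notMem_Ioi).mp hf).eventually
      (eventually_gt_nhds hf')
  obtain ⟨x, hx, hxab⟩ := (hslope.and (Ioo_mem_nhdsGT hab)).exists
  rw [slope_def_field, div_pos_iff_of_pos_right (sub_pos.mpr hxab.1)] at hx
  exact ⟨x, Ioo_subset_Ioc_self hxab, sub_pos.mp hx⟩

theorem hasDerivAt_rpow_one_div_one_add {w : ℝ} (hw : 0 < w) :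
    HasDerivAt (fun γ : ℝ => w ^ (1 / (1 + γ))) (-(w * log w)) 0 := by
  have hexp : HasDerivAt (fun γ : ℝ => 1 / (1 + γ)) (-1) 0 := by
    simpa [Pi.inv_def] using ((hasDerivAt_id (0 : ℝ)).const_add 1).inv (by norm_num)
  simpa using (hasDerivAt_const (0 : ℝ) w).rpow hexp hw

variable {X Y : Type*} [Fintype X] [Fintype Y]

theorem hasDerivAt_sum_rpow_one_div_one_add_rpow_one_add {p w : X → ℝ} (hw : ∀ x, 0 < w x)
    (hq : 0 < ∑ x, p x * w x) :
    HasDerivAt (fun γ : ℝ => (∑ x, p x * w x ^ (1 / (1 + γ))) ^ (1 + γ))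
      (-∑ x, p x * w x * log (w x / ∑ x', p x' * w x')) 0 := by
  have hinner : HasDerivAt (fun γ : ℝ => ∑ x, p x * w x ^ (1 / (1 + γ)))
      (∑ x, p x * -(w x * log (w x))) 0 :=
    HasDerivAt.fun_sum fun x _ => (hasDerivAt_rpow_one_div_one_add (hw x)).const_mul (p x)
  have hexp : HasDerivAt (fun γ : ℝ => 1 + γ) 1 0 := (hasDerivAt_id 0).const_add 1
  have h := hinner.rpow hexp (by simpa using hq)
  simp only [add_zero, div_one, rpow_one, sub_self, rpow_zero, mul_one, one_mul] at h
  convert h using 1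
  simp only [log_div (hw _).ne' hq.ne', mul_sub, Finset.sum_sub_distrib, ← Finset.sum_mul]
  simp only [mul_neg, Finset.sum_neg_distrib, mul_assoc]
  ring

noncomputable def gallagerSum (p : X → ℝ) (W : X → Y → ℝ) (γ : ℝ) : ℝ :=
  ∑ y, (∑ x, p x * W x y ^ (1 / (1 + γ))) ^ (1 + γ)

noncomputable def gallagerE₀ (p : X → ℝ) (W : X → Y → ℝ) (γ : ℝ) : ℝ :=
  -logb 2 (gallagerSum p W γ)

noncomputable def mutualInfo (p : X → ℝ) (W : X → Y → ℝ) : ℝ :=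
  ∑ y, ∑ x, p x * W x y * logb 2 (W x y / ∑ x', p x' * W x' y)

section Channel

variable {p : X → ℝ} {W : X → Y → ℝ}

theorem gallagerSum_zero (hp : ∑ x, p x = 1) (hW : ∀ x, ∑ y, W x y = 1) :
    gallagerSum p W 0 = 1 := by
  simp [gallagerSum, Finset.sum_comm (γ := Y), ← Finset.mul_sum, hW, hp]

theorem hasDerivAt_gallagerSum_zero (hWpos : ∀ x y, 0 < W x y)
    (hq : ∀ y, 0 < ∑ x, p x * W x y) :
    HasDerivAt (gallagerSum p W) (-(log 2 * mutualInfo p W)) 0 := by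
  refine (HasDerivAt.fun_sum fun y (_ : y ∈ Finset.univ) =>
    hasDerivAt_sum_rpow_one_div_one_add_rpow_one_add (fun x => hWpos x y) (hq y)).congr_deriv ?_
  simp only [mutualInfo, logb, Finset.mul_sum, Finset.sum_neg_distrib]
  congr! 2 with y _ x _
  field_simp

theorem gallagerE₀_zero (hp : ∑ x, p x = 1) (hW : ∀ x, ∑ y, W x y = 1) :
    gallagerE₀ p W 0 = 0 := by
  simp [gallagerE₀, gallagerSum_zero hp hW]

theorem hasDerivAt_gallagerE₀_zero (hp : ∑ x, p x = 1) (hW : ∀ x, ∑ y, W x y = 1)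
    (hWpos : ∀ x y, 0 < W x y) (hq : ∀ y, 0 < ∑ x, p x * W x y) :
    HasDerivAt (gallagerE₀ p W) (mutualInfo p W) 0 := by
  have h := ((hasDerivAt_gallagerSum_zero hWpos hq).log
    (by simp [gallagerSum_zero hp hW])).div_const (log 2) |>.neg
  rw [gallagerSum_zero hp hW] at h
  exact h.congr_deriv (by field_simp)

end Channel

end

theorem stmt_6_general {Y : Type*} [Fintype Y] (W : Bool → Y → ℝ)
    (hpos : ∀ x y, 0 < W x y) (hsum : ∀ x, ∑ y, W x y = 1)
    (R : ℝ)
    (hRC : R < ∑ y, ((1 / 2) * W false y *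
          Real.logb 2 (W false y / ((1 / 2) * (W false y + W true y)))
        + (1 / 2) * W true y *
          Real.logb 2 (W true y / ((1 / 2) * (W false y + W true y))))) :
    ∃ γ : ℝ, 0 < γ ∧ γ ≤ 1 ∧
      0 < (- Real.logb 2 (∑ y, ((1 / 2) * (W false y) ^ (1 / (1 + γ))
              + (1 / 2) * (W true y) ^ (1 / (1 + γ))) ^ (1 + γ))) - γ * R := by
  set p : Bool → ℝ := fun _ => 1 / 2
  have hp : ∑ x, p x = 1 := by norm_num [p]
  have hq : ∀ y, 0 < ∑ x, p x * W x y := fun y => by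
    have := hpos false y; have := hpos true y
    simp only [Fintype.sum_bool, p]; positivity
  have hcap : mutualInfo p W = ∑ y, ((1 / 2) * W false y *
          Real.logb 2 (W false y / ((1 / 2) * (W false y + W true y)))
        + (1 / 2) * W true y *
          Real.logb 2 (W true y / ((1 / 2) * (W false y + W true y)))) := by
    refine Finset.sum_congr rfl fun y _ => ?_
    simp only [Fintype.sum_bool, p]
    ring_nf
  have hderiv := (hasDerivAt_gallagerE₀_zero hp hsum hpos hq).sub ((hasDerivAt_id 0).mul_const R)
  obtain ⟨γ, ⟨hγ0, hγ1⟩, hγ⟩ := hderiv.hasDerivWithinAt.exists_mem_Ioc_lt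
    (by simpa [hcap] using hRC) zero_lt_one
  refine ⟨γ, hγ0, hγ1, ?_⟩
  have hE : 0 < gallagerE₀ p W γ - γ * R := by simpa [gallagerE₀_zero hp hsum] using hγ
  simpa [gallagerE₀, gallagerSum, p, add_comm] using hE

/-- For a BIOS channel with strictly positive transition probabilities,
capacity `C = Σ_y [½W(0,y)log₂(W(0,y)/Q(y)) + ½W(1,y)log₂(W(1,y)/Q(y))]` with
`Q(y) = ½(W(0,y)+W(1,y))`, and Gallager function
`E₀(γ) = -log₂ Σ_y (½W(0,y)^{1/(1+γ)} + ½W(1,y)^{1/(1+γ)})^{1+γ}`: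
for every `0 ≤ R < C` there exists `γ ∈ (0,1]` with `E₀(γ) - γR > 0`, i.e. the random
coding exponent `E_r(R)` is strictly positive whenever `R < C`.
The input `0` is encoded as `false` and `1` as `true`. -/
theorem stmt_6 {Y : Type*} [Fintype Y] (W : Bool → Y → ℝ)
    (hpos : ∀ x y, 0 < W x y) (hsum : ∀ x, ∑ y, W x y = 1)
    (π : Y → Y) (hinv : ∀ y, π (π y) = y) (hsym : ∀ y, W true y = W false (π y))
    (R : ℝ) (hR0 : 0 ≤ R)
    (hRC : R < ∑ y, ((1 / 2) * W false y *
          Real.logb 2 (W false y / ((1 / 2) * (W false y + W true y)))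
        + (1 / 2) * W true y *
          Real.logb 2 (W true y / ((1 / 2) * (W false y + W true y))))) :
    ∃ γ : ℝ, 0 < γ ∧ γ ≤ 1 ∧
      0 < (- Real.logb 2 (∑ y, ((1 / 2) * (W false y) ^ (1 / (1 + γ))
              + (1 / 2) * (W true y) ^ (1 / (1 + γ))) ^ (1 + γ))) - γ * R :=
  stmt_6_general W hpos hsum R hRC
end

section
/- Let Y be a finite set, let W : {0,1} × Y → ℝ be a channel admitting an involution π : Y → Y with π∘π = id and W(1,y) = W(0,π(y)) ≥ 0 for all y, and let γ ≥ 0. Then for every p ∈ [0,1]: Σ_{y∈Y} (½W(0,y)^{1/(1+γ)} + ½W(1,y)^{1/(1+γ)})^{1+γ} ≤ Σ_{y∈Y} ((1-p)W(0,y)^{1/(1+γ)} + p·W(1,y)^{1/(1+γ)})^{1+γ}. Consequently, for a BIOS channel the Gallager function E₀(γ,p) = -log₂ Σ_y (Σ_{x∈{0,1}} p(x) W(x,y)^{1/(1+γ)})^{1+γ} is maximized over input distributions at the uniform distribution p = 1/2. -/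
/-- For a channel admitting an involution `π` with `π∘π = id` and
`W(1,y) = W(0,π(y)) ≥ 0`, and `γ ≥ 0`: for every `p ∈ [0,1]`,
`Σ_y (½W(0,y)^{1/(1+γ)} + ½W(1,y)^{1/(1+γ)})^{1+γ}
  ≤ Σ_y ((1-p)W(0,y)^{1/(1+γ)} + p W(1,y)^{1/(1+γ)})^{1+γ}`.
Consequently, for a BIOS channel the Gallager function
`E₀(γ,p) = -log₂ Σ_y (Σ_x p(x) W(x,y)^{1/(1+γ)})^{1+γ}` is maximized over input
distributions at the uniform distribution `p = 1/2`.
The input `0` is encoded as `false` and `1` as `true`. -/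
theorem stmt_8 {Y : Type*} [Fintype Y] (W : Bool → Y → ℝ)
    (hW : ∀ x y, 0 ≤ W x y) (hsum : ∀ x, ∑ y, W x y = 1)
    (π : Y → Y) (hinv : ∀ y, π (π y) = y) (hsym : ∀ y, W true y = W false (π y))
    (γ : ℝ) (hγ : 0 ≤ γ) (p : ℝ) (hp0 : 0 ≤ p) (hp1 : p ≤ 1) :
    (∑ y, ((1 / 2) * (W false y) ^ (1 / (1 + γ))
          + (1 / 2) * (W true y) ^ (1 / (1 + γ))) ^ (1 + γ)
      ≤ ∑ y, ((1 - p) * (W false y) ^ (1 / (1 + γ))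
          + p * (W true y) ^ (1 / (1 + γ))) ^ (1 + γ))
    ∧ (- Real.logb 2 (∑ y, ((1 - p) * (W false y) ^ (1 / (1 + γ))
          + p * (W true y) ^ (1 / (1 + γ))) ^ (1 + γ))
      ≤ - Real.logb 2 (∑ y, ((1 / 2) * (W false y) ^ (1 / (1 + γ))
          + (1 / 2) * (W true y) ^ (1 / (1 + γ))) ^ (1 + γ))) := by
  set α := 1 / (1 + γ) with hα
  set q := 1 + γ with hq
  have hq1 : (1:ℝ) ≤ q := by simp [hq]; linarith
  set f : Y → ℝ := fun y => (W false y) ^ α with hf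
  have hfnn : ∀ y, 0 ≤ f y := fun y => Real.rpow_nonneg (hW false y) α
  have hgf : ∀ y, (W true y) ^ α = f (π y) := fun y => by rw [hsym y]
  have hfg : ∀ y, f y = (W true (π y)) ^ α := fun y => by rw [hgf, hinv]
  -- a and b
  set a : Y → ℝ := fun y => (1 - p) * f y + p * f (π y) with ha
  set b : Y → ℝ := fun y => p * f y + (1 - p) * f (π y) with hb
  have hba : ∀ y, b y = a (π y) := fun y => by simp [ha, hb, hinv y]; ring
  have hann : ∀ y, 0 ≤ a y :=
    fun y => add_nonneg (mul_nonneg (by linarith) (hfnn y)) (mul_nonneg hp0 (hfnn (π y)))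
  have hbnn : ∀ y, 0 ≤ b y :=
    fun y => add_nonneg (mul_nonneg hp0 (hfnn y)) (mul_nonneg (by linarith) (hfnn (π y)))
  have hbij : Function.Bijective π :=
    Function.Involutive.bijective hinv
  have hsumab : ∑ y, (b y) ^ q = ∑ y, (a y) ^ q := by
    rw [show (fun y => (b y)^q) = (fun y => (a (π y))^q) from funext fun y => by rw [hba]]
    exact Fintype.sum_bijective π hbij _ _ (fun y => rfl)
  -- pointwise convexity
  have hmain : ∑ y, ((1/2) * f y + (1/2) * f (π y)) ^ q ≤ ∑ y, (a y) ^ q := by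
    have key : ∀ y, ((1/2) * f y + (1/2) * f (π y)) ^ q
        ≤ (1/2) * (a y) ^ q + (1/2) * (b y) ^ q := by
      intro y
      have hconv := (convexOn_rpow hq1).2 (Set.mem_Ici.mpr (hann y))
        (Set.mem_Ici.mpr (hbnn y))
        (by norm_num : (0:ℝ) ≤ (1/2:ℝ)) (by norm_num : (0:ℝ) ≤ (1/2:ℝ)) (by norm_num)
      rw [smul_eq_mul, smul_eq_mul, smul_eq_mul, smul_eq_mul] at hconv
      have harg : (1/2 : ℝ) * a y + (1/2 : ℝ) * b y = (1/2) * f y + (1/2) * f (π y) := by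
        simp only [ha, hb]; ring
      rw [harg] at hconv
      exact hconv
    calc ∑ y, ((1/2) * f y + (1/2) * f (π y)) ^ q
        ≤ ∑ y, ((1/2) * (a y) ^ q + (1/2) * (b y) ^ q) := Finset.sum_le_sum fun y _ => key y
      _ = (1/2) * ∑ y, (a y) ^ q + (1/2) * ∑ y, (b y) ^ q := by
          rw [Finset.sum_add_distrib, Finset.mul_sum, Finset.mul_sum]
      _ = ∑ y, (a y) ^ q := by rw [hsumab]; ring
  have hineq1 : ∑ y, ((1 / 2) * (W false y) ^ α + (1 / 2) * (W true y) ^ α) ^ q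
      ≤ ∑ y, ((1 - p) * (W false y) ^ α + p * (W true y) ^ α) ^ q := by
    simpa only [hgf] using hmain
  refine ⟨hineq1, ?_⟩
  -- positivity of the uniform sum
  have hex : ∃ y, 0 < W false y := by
    by_contra h
    push_neg at h
    have : ∑ y, W false y = 0 := Finset.sum_eq_zero fun y _ => le_antisymm (h y) (hW false y)
    rw [hsum false] at this; norm_num at this
  obtain ⟨y0, hy0⟩ := hex
  have hpos : 0 < ∑ y, ((1 / 2) * (W false y) ^ α + (1 / 2) * (W true y) ^ α) ^ q := by
    apply Finset.sum_pos'
    · intro y _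
      have h1 : 0 ≤ (W false y) ^ α := Real.rpow_nonneg (hW false y) α
      have h2 : 0 ≤ (W true y) ^ α := Real.rpow_nonneg (hW true y) α
      positivity
    · refine ⟨y0, Finset.mem_univ y0, ?_⟩
      have h1 : 0 < (W false y0) ^ α := Real.rpow_pos_of_pos hy0 α
      have h2 : 0 ≤ (W true y0) ^ α := Real.rpow_nonneg (hW true y0) α
      have : 0 < (1/2) * (W false y0) ^ α + (1/2) * (W true y0) ^ α := by positivity
      exact Real.rpow_pos_of_pos this q
  have := Real.logb_le_logb_of_le (b := 2) (by norm_num) hpos hineq1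
  linarith
end

section
/- Let Y be a finite set, let W : {0,1} × Y → ℝ be a channel with W(x,y) > 0 for all x,y and Σ_{y∈Y} W(x,y) = 1 for each x, let n ≥ 1 be an integer, and let s > 0 and γ ≥ 0 be reals. Then Σ_{y ∈ Y^n} (Π_{i=0}^{n-1} W(0,y_i)) · ( Σ_{x ∈ F₂^n} Π_{i=0}^{n-1} W(x_i,y_i)^s / Π_{i=0}^{n-1} W(0,y_i)^s )^γ = 2^{nγ} · ( Σ_{y∈Y} W(0,y)^{1-γs} ( ½W(0,y)^s + ½W(1,y)^s )^γ )^n. -/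
/-- Let `W : F₂ × Y → ℝ` be a positive memoryless channel (`Σ_y W(x,y) = 1`),
`n ≥ 1`, `s > 0`, `γ ≥ 0`. Then
`Σ_{y ∈ Y^n} (Π_i W(0,y_i)) · (Σ_{x ∈ F₂^n} Π_i W(x_i,y_i)^s / Π_i W(0,y_i)^s)^γ
  = 2^{nγ} · (Σ_y W(0,y)^{1-γs} (½W(0,y)^s + ½W(1,y)^s)^γ)^n`. -/
theorem stmt_10 {Y : Type*} [Fintype Y] (W : ZMod 2 → Y → ℝ)
    (hpos : ∀ x y, 0 < W x y) (hsum : ∀ x, ∑ y, W x y = 1)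
    (n : ℕ) (hn : 1 ≤ n) (s γ : ℝ) (hs : 0 < s) (hγ : 0 ≤ γ) :
    ∑ y : Fin n → Y,
      (∏ i : Fin n, W 0 (y i)) *
        ((∑ x : Fin n → ZMod 2, ∏ i : Fin n, (W (x i) (y i)) ^ s)
          / ∏ i : Fin n, (W 0 (y i)) ^ s) ^ γ
    = (2 : ℝ) ^ ((n : ℝ) * γ) *
        (∑ y : Y, (W 0 y) ^ (1 - γ * s) *
          ((1 / 2) * (W 0 y) ^ s + (1 / 2) * (W 1 y) ^ s) ^ γ) ^ n := by
  set f : Y → ℝ := fun z => W 0 z * ((W 0 z ^ s + W 1 z ^ s) / W 0 z ^ s) ^ γ with hf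
  have key : ∀ y : Fin n → Y,
      (∏ i : Fin n, W 0 (y i)) *
        ((∑ x : Fin n → ZMod 2, ∏ i : Fin n, (W (x i) (y i)) ^ s)
          / ∏ i : Fin n, (W 0 (y i)) ^ s) ^ γ = ∏ i : Fin n, f (y i) := by
    intro y
    have hsx : (∑ x : Fin n → ZMod 2, ∏ i : Fin n, (W (x i) (y i)) ^ s)
        = ∏ i : Fin n, (W 0 (y i) ^ s + W 1 (y i) ^ s) := by
      rw [← Fintype.prod_sum (fun i (x : ZMod 2) => W x (y i) ^ s)]
      refine Finset.prod_congr rfl fun i _ => ?_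
      rw [show (Finset.univ : Finset (ZMod 2)) = {0, 1} from by decide]
      simp
    rw [hsx, ← Finset.prod_div_distrib,
      ← Real.finset_prod_rpow _ _
        (fun i _ => div_nonneg
          (add_nonneg (Real.rpow_nonneg (hpos 0 (y i)).le s)
            (Real.rpow_nonneg (hpos 1 (y i)).le s))
          (Real.rpow_nonneg (hpos 0 (y i)).le s)) γ,
      ← Finset.prod_mul_distrib]
  simp_rw [key]
  rw [Finset.sum_pow']
  rw [Fintype.piFinset_univ]
  have hfz : ∀ z : Y, f z = (2:ℝ)^γ * (W 0 z ^ (1 - γ * s) *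
      ((1 / 2) * (W 0 z) ^ s + (1 / 2) * (W 1 z) ^ s) ^ γ) := by
    intro z
    have ha := hpos 0 z
    have hb := hpos 1 z
    have hA : (0:ℝ) ≤ W 0 z ^ s + W 1 z ^ s :=
      add_nonneg (Real.rpow_nonneg ha.le s) (Real.rpow_nonneg hb.le s)
    have h1 : (1 / 2) * (W 0 z) ^ s + (1 / 2) * (W 1 z) ^ s
        = (W 0 z ^ s + W 1 z ^ s) / 2 := by ring
    show W 0 z * ((W 0 z ^ s + W 1 z ^ s) / W 0 z ^ s) ^ γ = _
    rw [h1, Real.div_rpow hA (Real.rpow_nonneg ha.le s),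
      Real.div_rpow hA (by norm_num : (0:ℝ) ≤ 2),
      Real.rpow_sub ha, Real.rpow_one,
      ← Real.rpow_mul ha.le s γ, mul_comm s γ]
    have h2 : (0:ℝ) < (2:ℝ) ^ γ := Real.rpow_pos_of_pos (by norm_num) γ
    have h3 : (0:ℝ) < W 0 z ^ (γ * s) := Real.rpow_pos_of_pos ha (γ * s)
    field_simp
  simp_rw [hfz, Finset.prod_mul_distrib, Finset.prod_const, Finset.card_univ,
    Fintype.card_fin, ← Finset.mul_sum]
  congr 1
  rw [← Real.rpow_natCast ((2:ℝ)^γ) n, ← Real.rpow_mul (by norm_num : (0:ℝ) ≤ 2),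
    mul_comm γ (n:ℝ)]
end

section
/- Let 0 ≤ ρ ≤ 1, let n > k ≥ 1 be integers, and let P be a random k×(n-k) matrix over F₂ with i.i.d. Bernoulli(ρ) entries. For 1 ≤ i ≤ k and 0 ≤ j ≤ n-k, the expected number of vectors u ∈ F₂^k with Hamming weight W_H(u) = i and W_H(uP) = j equals A_{ij} = C(k,i) · C(n-k,j) · ρ_i^j (1-ρ_i)^{n-k-j}, where ρ_i = (1-(1-2ρ)^i)/2 and C(·,·) denotes the binomial coefficient. -/
/-!
Fix `u` of weight `i`. The columns `c` of `P` are independent, and the entry of `uP` in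
column `c` is the parity `u ⬝ᵥ c`. Averaging the character `(-1)^(u ⬝ᵥ c)` coordinatewise gives
`(1 - 2ρ)^i`, so `u ⬝ᵥ c ≠ 0` with probability `ρ_i = (1 - (1 - 2ρ)^i) / 2`. Hence `W_H(uP)` is
binomially distributed with parameters `n - k` and `ρ_i`, and summing over the `C(k,i)` vectors
of weight `i` gives `A_{ij}`.
-/

open Matrix Finset

section Binomial

variable {ι C R : Type*} [Fintype ι] [DecidableEq ι] [Fintype C] [CommSemiring R]
  (f : C → R) (p : C → Prop) [DecidablePred p]

theorem sum_prod_filter_eq (S : Finset ι) :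
    ∑ g : ι → C with ({b | p (g b)} : Finset ι) = S, ∏ b, f (g b) =
      (∑ c with p c, f c) ^ #S * (∑ c with ¬p c, f c) ^ (Fintype.card ι - #S) := by
  have hfiber : ({g : ι → C | ({b | p (g b)} : Finset ι) = S} : Finset (ι → C)) =
      Fintype.piFinset fun b =>
        if b ∈ S then ({c | p c} : Finset C) else ({c | ¬p c} : Finset C) := by
    ext g
    simp only [mem_filter, mem_univ, true_and, Fintype.mem_piFinset, Finset.ext_iff]
    refine forall_congr' fun b => ?_
    split_ifs with hb <;> simp [hb]
  rw [hfiber, ← prod_univ_sum]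
  simp only [apply_ite (fun t : Finset C => ∑ c ∈ t, f c)]
  rw [prod_ite, prod_const, prod_const, filter_univ_mem, ← card_compl, filter_notMem_eq_sdiff,
    compl_eq_univ_sdiff]

theorem sum_prod_card_filter_eq (j : ℕ) :
    ∑ g : ι → C with #{b | p (g b)} = j, ∏ b, f (g b) =
      (Fintype.card ι).choose j * (∑ c with p c, f c) ^ j *
        (∑ c with ¬p c, f c) ^ (Fintype.card ι - j) := by
  rw [← sum_fiberwise_of_maps_to (t := powersetCard j univ)
    (g := fun g : ι → C => ({b | p (g b)} : Finset ι)) (fun g hg => by simpa using hg)]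
  rw [sum_congr rfl fun S hS => ?_]
  · rw [sum_const, card_powersetCard, card_univ, nsmul_eq_mul, mul_assoc]
  · have hS : #S = j := (mem_powersetCard.1 hS).2
    rw [filter_filter, ← hS, ← sum_prod_filter_eq]
    congr 1
    ext g
    simp only [mem_filter, mem_univ, true_and, and_iff_right_iff_imp]
    rintro rfl
    rfl

end Binomial

theorem card_filter_hammingNorm_eq {ι β : Type*} [Fintype ι] [DecidableEq ι] [Fintype β]
    [DecidableEq β] [Zero β] (i : ℕ) :
    #{x : ι → β | hammingNorm x = i} = (Fintype.card ι).choose i * (Fintype.card β - 1) ^ i := by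
  have h := sum_prod_card_filter_eq (ι := ι) (fun _ : β => 1) (· ≠ 0) i
  simp only [prod_const_one, sum_const, smul_eq_mul, mul_one, filter_ne',
    card_erase_of_mem (mem_univ _), card_univ] at h
  rw [card_eq_sum_ones]
  simpa [hammingNorm, filter_eq'] using h

theorem ZMod.eq_zero_or_eq_one (x : ZMod 2) : x = 0 ∨ x = 1 := by
  revert x; decide

theorem AddChar.map_sum_eq_prod {ι A M : Type*} [AddCommMonoid A] [CommMonoid M]
    (ψ : AddChar A M) (s : Finset ι) (f : ι → A) : ψ (∑ i ∈ s, f i) = ∏ i ∈ s, ψ (f i) := by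
  induction s using Finset.cons_induction with
  | empty => simp
  | cons a s ha ih => rw [sum_cons, prod_cons, ψ.map_add_eq_mul, ih]

def parityChar (R : Type*) [CommRing R] : AddChar (ZMod 2) R where
  toFun x := if x = 1 then -1 else 1
  map_zero_eq_one' := by simp
  map_add_eq_mul' a b := by
    rcases a.eq_zero_or_eq_one with rfl | rfl <;>
      rcases b.eq_zero_or_eq_one with rfl | rfl <;>
      simp [show (1 + 1 : ZMod 2) = 0 from rfl, show (0 : ZMod 2) ≠ 1 by decide]

theorem ite_ne_zero_eq_one_sub_parityChar_div_two (x : ZMod 2) :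
    (if x ≠ 0 then 1 else 0 : ℝ) = (1 - parityChar ℝ x) / 2 := by
  rcases x.eq_zero_or_eq_one with rfl | rfl <;> norm_num [parityChar]

section Bernoulli

def bernoulliWeight (ρ : ℝ) (x : ZMod 2) : ℝ := if x = 1 then ρ else 1 - ρ

variable (ρ : ℝ) {ι : Type*} [Fintype ι] [DecidableEq ι]

theorem sum_bernoulliWeight_mul_parityChar (y : ZMod 2) :
    ∑ x, bernoulliWeight ρ x * parityChar ℝ (y * x) = if y ≠ 0 then 1 - 2 * ρ else 1 := by
  rw [show (univ : Finset (ZMod 2)) = {0, 1} by decide, sum_pair (by decide)]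
  rcases y.eq_zero_or_eq_one with rfl | rfl
  · norm_num [bernoulliWeight]
  · norm_num [bernoulliWeight, parityChar, show (0 : ZMod 2) ≠ 1 by decide]
    ring

theorem sum_prod_bernoulliWeight_mul_parityChar_dotProduct (u : ι → ZMod 2) :
    ∑ c : ι → ZMod 2, (∏ a, bernoulliWeight ρ (c a)) * parityChar ℝ (u ⬝ᵥ c) =
      (1 - 2 * ρ) ^ hammingNorm u := by
  simp only [dotProduct, AddChar.map_sum_eq_prod, ← prod_mul_distrib]
  rw [← Fintype.prod_sum fun a x => bernoulliWeight ρ x * parityChar ℝ (u a * x)]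
  simp only [sum_bernoulliWeight_mul_parityChar, prod_ite, prod_const_one, mul_one, prod_const]
  rfl

theorem sum_prod_bernoulliWeight :
    ∑ c : ι → ZMod 2, ∏ a, bernoulliWeight ρ (c a) = 1 := by
  simpa using sum_prod_bernoulliWeight_mul_parityChar_dotProduct ρ (0 : ι → ZMod 2)

theorem sum_prod_bernoulliWeight_filter_dotProduct_ne_zero (u : ι → ZMod 2) :
    ∑ c : ι → ZMod 2 with u ⬝ᵥ c ≠ 0, ∏ a, bernoulliWeight ρ (c a) =
      (1 - (1 - 2 * ρ) ^ hammingNorm u) / 2 := by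
  calc _ = ∑ c : ι → ZMod 2, (∏ a, bernoulliWeight ρ (c a)) * if u ⬝ᵥ c ≠ 0 then 1 else 0 := by
        simp only [sum_filter, mul_boole]
    _ = ∑ c : ι → ZMod 2, ((∏ a, bernoulliWeight ρ (c a)) -
          (∏ a, bernoulliWeight ρ (c a)) * parityChar ℝ (u ⬝ᵥ c)) / 2 := by
        simp only [ite_ne_zero_eq_one_sub_parityChar_div_two, mul_div_assoc', mul_sub, mul_one]
    _ = _ := by
        rw [← sum_div, sum_sub_distrib, sum_prod_bernoulliWeight,
          sum_prod_bernoulliWeight_mul_parityChar_dotProduct]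

theorem sum_prod_bernoulliWeight_filter_dotProduct_eq_zero (u : ι → ZMod 2) :
    ∑ c : ι → ZMod 2 with ¬u ⬝ᵥ c ≠ 0, ∏ a, bernoulliWeight ρ (c a) =
      1 - (1 - (1 - 2 * ρ) ^ hammingNorm u) / 2 := by
  rw [← sum_prod_bernoulliWeight_filter_dotProduct_ne_zero,
    ← sum_prod_bernoulliWeight ρ (ι := ι), ← sum_filter_add_sum_filter_not univ (u ⬝ᵥ · ≠ 0),
    add_sub_cancel_left]

variable {κ : Type*} [Fintype κ] [DecidableEq κ]

theorem sum_prod_bernoulliWeight_filter_hammingNorm_vecMul (u : ι → ZMod 2) (j : ℕ) :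
    ∑ P : Matrix ι κ (ZMod 2) with hammingNorm (u ᵥ* P) = j, ∏ a, ∏ b, bernoulliWeight ρ (P a b) =
      (Fintype.card κ).choose j * ((1 - (1 - 2 * ρ) ^ hammingNorm u) / 2) ^ j *
        (1 - (1 - (1 - 2 * ρ) ^ hammingNorm u) / 2) ^ (Fintype.card κ - j) := by
  rw [← sum_prod_bernoulliWeight_filter_dotProduct_eq_zero,
    ← sum_prod_bernoulliWeight_filter_dotProduct_ne_zero, ← sum_prod_card_filter_eq]
  exact sum_equiv (transposeAddEquiv ι κ (ZMod 2)).toEquiv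
    (fun _ => by simp only [mem_filter, mem_univ, true_and]; rfl) (fun _ _ => prod_comm)

theorem sum_prod_bernoulliWeight_mul_card_filter_hammingNorm (i j : ℕ) :
    ∑ P : Matrix ι κ (ZMod 2), (∏ a, ∏ b, bernoulliWeight ρ (P a b)) *
        (#{u : ι → ZMod 2 | hammingNorm u = i ∧ hammingNorm (u ᵥ* P) = j} : ℝ) =
      (Fintype.card ι).choose i * (Fintype.card κ).choose j *
        ((1 - (1 - 2 * ρ) ^ i) / 2) ^ j *
          (1 - (1 - (1 - 2 * ρ) ^ i) / 2) ^ (Fintype.card κ - j) := by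
  simp only [← filter_filter, card_filter, Nat.cast_sum, Nat.cast_ite, Nat.cast_one,
    Nat.cast_zero, mul_sum, mul_boole]
  rw [sum_comm]
  simp only [← sum_filter, sum_prod_bernoulliWeight_filter_hammingNorm_vecMul]
  rw [sum_congr rfl fun u hu => by rw [(mem_filter.1 hu).2], sum_const,
    card_filter_hammingNorm_eq, nsmul_eq_mul]
  simp only [ZMod.card, Nat.add_one_sub_one, one_pow, mul_one]
  ring

end Bernoulli

theorem stmt_12_general (ρ : ℝ) (n k : ℕ) (i j : ℕ) :
    ∑ P : Matrix (Fin k) (Fin (n - k)) (ZMod 2),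
      (∏ a : Fin k, ∏ b : Fin (n - k), (if P a b = 1 then ρ else 1 - ρ)) *
        ((Finset.univ.filter (fun u : Fin k → ZMod 2 =>
            hammingNorm u = i ∧ hammingNorm (Matrix.vecMul u P) = j)).card : ℝ)
    = (k.choose i : ℝ) * ((n - k).choose j : ℝ) *
        ((1 - (1 - 2 * ρ) ^ i) / 2) ^ j *
        (1 - (1 - (1 - 2 * ρ) ^ i) / 2) ^ (n - k - j) := by
  have h := sum_prod_bernoulliWeight_mul_card_filter_hammingNorm ρ
    (ι := Fin k) (κ := Fin (n - k)) i j
  rwa [Fintype.card_fin, Fintype.card_fin] at h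

/-- Let `0 ≤ ρ ≤ 1`, `n > k ≥ 1`, and let `P` be a random `k×(n-k)` matrix
over `F₂` with i.i.d. Bernoulli(ρ) entries. For `1 ≤ i ≤ k` and `0 ≤ j ≤ n-k`, the
expected number of `u ∈ F₂^k` with `W_H(u) = i` and `W_H(uP) = j` equals
`A_{ij} = C(k,i) C(n-k,j) ρ_i^j (1-ρ_i)^{n-k-j}` with `ρ_i = (1-(1-2ρ)^i)/2`.
The expectation is written as the sum over all matrices `P` of the product Bernoulli(ρ)
probability of `P` times the number of such vectors `u`. -/
theorem stmt_12 (ρ : ℝ) (hρ0 : 0 ≤ ρ) (hρ1 : ρ ≤ 1) (n k : ℕ) (hk : 1 ≤ k) (hkn : k < n)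
    (i j : ℕ) (hi1 : 1 ≤ i) (hik : i ≤ k) (hj : j ≤ n - k) :
    ∑ P : Matrix (Fin k) (Fin (n - k)) (ZMod 2),
      (∏ a : Fin k, ∏ b : Fin (n - k), (if P a b = 1 then ρ else 1 - ρ)) *
        ((Finset.univ.filter (fun u : Fin k → ZMod 2 =>
            hammingNorm u = i ∧ hammingNorm (Matrix.vecMul u P) = j)).card : ℝ)
    = (k.choose i : ℝ) * ((n - k).choose j : ℝ) *
        ((1 - (1 - 2 * ρ) ^ i) / 2) ^ j *
        (1 - (1 - (1 - 2 * ρ) ^ i) / 2) ^ (n - k - j) :=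
  stmt_12_general ρ n k i j
end
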